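/- (Theorem A / Proposition 2.1) Let μ : I → ℝ be a smooth function with max_{t∈I} |μ(t)| < min_{t∈I} κ(t) and μ > 0. Consider the set of all maps g : I × (−ε, ε) → ℝ³ of the following form: g(t,v) = c(s(t)) + v ξ(t), where s is either the identity map of I or the reversal s(t) = a + b − t, ξ(t) := cos β(t) ê(t) + sin β(t)(cos α(t) n̂(t) + sin α(t) b̂(t)) is built from the Frenet frame (ê, n̂, b̂) of the reparametrized curve c∘s, the smooth functions α, β satisfy 0 < |α(t)| < π/2 and 0 < β(t) < π, g is developable (det((c∘s)', ξ, ξ') = 0), and the geodesic curvature condition κ(s(t)) cos α(t) = μ(t) holds for all t ∈ I. Then this set contains at most four maps. -/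

import Mathlib

noncomputable section
open Real Set
open scoped ContDiff

local notation "⟪" x ", " y "⟫" => @inner ℝ _ _ x y

/-- Euclidean 3-space. -/
abbrev E3 := EuclideanSpace ℝ (Fin 3)

/-- The vector (cross) product of `ℝ³`. -/
def cross3 (u v : E3) : E3 :=
  (WithLp.equiv 2 (Fin 3 → ℝ)).symm
    ![u 1 * v 2 - u 2 * v 1, u 2 * v 0 - u 0 * v 2, u 0 * v 1 - u 1 * v 0]

/-!
On `I` the geodesic curvature condition fixes `cos α = μ / κ`, and `sin α`, having no zero on
`I`, has constant sign; so once `s` and that sign are chosen, `α` and hence the conormal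
`w = cos α n̂ + sin α b̂` are determined on `I`. Writing `ξ = cos β ê + sin β w`, developability
becomes `cos β ⟪ê × w, ê'⟫ + sin β ⟪ê × w, w'⟫ = 0`, where `⟪ê × w, ê'⟫ = -κ sin α ≠ 0`; this
fixes `cot β`, hence `β ∈ (0, π)`, on the interior of `I`, and on `I` by continuity. Each of the
four choices therefore carries at most one strip.
-/

open Filter Topology

lemma inner_E3 (x y : E3) : ⟪x, y⟫ = x 0 * y 0 + x 1 * y 1 + x 2 * y 2 := by
  simp [PiLp.inner_apply, Fin.sum_univ_three]; ring

@[simp] lemma cross3_apply (u v : E3) (i : Fin 3) :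
    cross3 u v i = ![u 1 * v 2 - u 2 * v 1, u 2 * v 0 - u 0 * v 2, u 0 * v 1 - u 1 * v 0] i := by
  simp [cross3]

lemma cross3_self (u : E3) : cross3 u u = 0 := by
  ext i; fin_cases i <;> simp <;> ring

lemma inner_cross3_self_left (u v : E3) : ⟪cross3 u v, u⟫ = 0 := by
  simp [inner_E3]; ring

lemma inner_cross3_self_right (u v : E3) : ⟪cross3 u v, v⟫ = 0 := by
  simp [inner_E3]; ring

lemma cross3_smul_add_smul (u v w : E3) (p q : ℝ) :
    cross3 u (p • v + q • w) = p • cross3 u v + q • cross3 u w := by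
  ext i; fin_cases i <;> simp <;> ring

lemma inner_cross3_cross3_self (u v : E3) :
    ⟪cross3 u (cross3 u v), v⟫ = ⟪u, v⟫ ^ 2 - ⟪u, u⟫ * ⟪v, v⟫ := by
  simp only [inner_E3]; simp; ring

lemma DifferentiableAt.cross3 {F : Type*} [NormedAddCommGroup F] [NormedSpace ℝ F]
    {f g : F → E3} {x : F} (hf : DifferentiableAt ℝ f x) (hg : DifferentiableAt ℝ g x) :
    DifferentiableAt ℝ (fun y => _root_.cross3 (f y) (g y)) x := by
  rw [differentiableAt_euclidean] at hf hg ⊢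
  intro i
  fin_cases i <;> simp only [cross3_apply] <;> simp <;> fun_prop

lemma inner_cross3_smul_add_smul_cross3 {e n : E3} (he : ⟪e, e⟫ = 1) (hn : ⟪n, n⟫ = 1)
    (hen : ⟪e, n⟫ = 0) (p q : ℝ) : ⟪cross3 e (p • n + q • cross3 e n), n⟫ = -q := by
  rw [cross3_smul_add_smul, inner_add_left, real_inner_smul_left, real_inner_smul_left,
    inner_cross3_self_right, inner_cross3_cross3_self, he, hn, hen]
  ring

lemma inner_eq_zero_of_hasDerivAt_of_norm_eq_one {F : Type*} [NormedAddCommGroup F]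
    [InnerProductSpace ℝ F] {e : ℝ → F} {e' : F} {t : ℝ} (he : HasDerivAt e e' t)
    (hunit : ∀ᶠ x in 𝓝 t, ‖e x‖ = 1) : ⟪e t, e'⟫ = 0 := by
  have h0 : HasDerivAt (‖e ·‖ ^ 2) 0 t :=
    (hasDerivAt_const t (1 : ℝ)).congr_of_eventuallyEq (hunit.mono fun x hx => by simp [hx])
  linarith [he.norm_sq.unique h0]

lemma norm_deriv_comp_const_sub {F : Type*} [NormedAddCommGroup F] [NormedSpace ℝ F]
    (f : ℝ → F) (A x : ℝ) : ‖deriv (fun z => f (A - z)) x‖ = ‖deriv f (A - x)‖ := by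
  rw [deriv_comp_const_sub, norm_neg]

lemma deriv_deriv_comp_const_sub {F : Type*} [NormedAddCommGroup F] [NormedSpace ℝ F]
    (f : ℝ → F) (A x : ℝ) : deriv (deriv fun z => f (A - z)) x = deriv (deriv f) (A - x) := by
  simpa [iteratedDeriv_succ] using congrFun (iteratedDeriv_comp_const_sub 2 f A) x

section FrenetFrame

variable {d : ℝ → E3} {t : ℝ}

def frenetNormal (d : ℝ → E3) (t : ℝ) : E3 := ‖deriv (deriv d) t‖⁻¹ • deriv (deriv d) t

/-- The unit vector of the strip's tangent plane orthogonal to `ê`; the geodesic curvature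
of the curve in the strip is `κ cos α`. -/
def conormal (d : ℝ → E3) (α : ℝ → ℝ) (t : ℝ) : E3 :=
  cos (α t) • frenetNormal d t + sin (α t) • cross3 (deriv d t) (frenetNormal d t)

lemma differentiableAt_conormal {α : ℝ → ℝ} (hd₁ : DifferentiableAt ℝ (deriv d) t)
    (hd₂ : DifferentiableAt ℝ (deriv (deriv d)) t) (hκ : deriv (deriv d) t ≠ 0)
    (hα : DifferentiableAt ℝ α t) : DifferentiableAt ℝ (conormal d α) t := by
  have hn : DifferentiableAt ℝ (frenetNormal d) t :=
    ((hd₂.norm ℝ hκ).inv (norm_ne_zero_iff.2 hκ)).smul hd₂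
  exact (hα.cos.smul hn).add (hα.sin.smul (hd₁.cross3 hn))

lemma inner_cross3_conormal_deriv_deriv {α : ℝ → ℝ}
    (hunit : ∀ᶠ x in 𝓝 t, ‖deriv d x‖ = 1) (hd₁ : DifferentiableAt ℝ (deriv d) t)
    (hκ : deriv (deriv d) t ≠ 0) :
    ⟪cross3 (deriv d t) (conormal d α t), deriv (deriv d) t⟫ =
      -(‖deriv (deriv d) t‖ * sin (α t)) := by
  have hκ' : ‖deriv (deriv d) t‖ ≠ 0 := norm_ne_zero_iff.2 hκ
  have hsplit : deriv (deriv d) t = ‖deriv (deriv d) t‖ • frenetNormal d t := by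
    rw [frenetNormal, smul_inv_smul₀ hκ']
  have he : ⟪deriv d t, deriv d t⟫ = 1 := by
    rw [real_inner_self_eq_norm_sq, hunit.self_of_nhds, one_pow]
  have hn : ⟪frenetNormal d t, frenetNormal d t⟫ = 1 := by
    rw [real_inner_self_eq_norm_sq, frenetNormal, norm_smul, norm_inv, norm_norm,
      inv_mul_cancel₀ hκ', one_pow]
  have hen : ⟪deriv d t, frenetNormal d t⟫ = 0 := by
    rw [frenetNormal, real_inner_smul_right,
      inner_eq_zero_of_hasDerivAt_of_norm_eq_one hd₁.hasDerivAt hunit, mul_zero]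
  rw [conormal, hsplit, real_inner_smul_right, inner_cross3_smul_add_smul_cross3 he hn hen,
    ← hsplit]
  ring

end FrenetFrame

lemma cos_mul_add_sin_mul_eq_zero_of_developable {e w ξ : ℝ → E3} {β : ℝ → ℝ} {e' w' : E3}
    {t : ℝ} (he : HasDerivAt e e' t) (hw : HasDerivAt w w' t) (hβ : DifferentiableAt ℝ β t)
    (hsin : sin (β t) ≠ 0) (hξ : ξ =ᶠ[𝓝 t] fun x => cos (β x) • e x + sin (β x) • w x)
    (hdev : ⟪cross3 (e t) (ξ t), deriv ξ t⟫ = 0) :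
    cos (β t) * ⟪cross3 (e t) (w t), e'⟫ + sin (β t) * ⟪cross3 (e t) (w t), w'⟫ = 0 := by
  have hξ' : HasDerivAt (fun x => cos (β x) • e x + sin (β x) • w x) _ t :=
    (hβ.hasDerivAt.cos.smul he).add (hβ.hasDerivAt.sin.smul hw)
  rw [hξ.deriv_eq, hξ.self_of_nhds, hξ'.deriv, cross3_smul_add_smul, cross3_self, smul_zero,
    zero_add] at hdev
  simp only [inner_add_right, real_inner_smul_left, real_inner_smul_right,
    inner_cross3_self_left, inner_cross3_self_right, mul_zero, add_zero] at hdev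
  have : sin (β t) * (cos (β t) * ⟪cross3 (e t) (w t), e'⟫ +
      sin (β t) * ⟪cross3 (e t) (w t), w'⟫) = 0 := by
    linear_combination hdev
  exact (mul_eq_zero.1 this).resolve_left hsin

lemma eq_of_cos_mul_add_sin_mul_eq_zero {A B β₁ β₂ : ℝ} (hA : A ≠ 0) (h₁ : β₁ ∈ Ioo 0 π)
    (h₂ : β₂ ∈ Ioo 0 π) (e₁ : cos β₁ * A + sin β₁ * B = 0)
    (e₂ : cos β₂ * A + sin β₂ * B = 0) : β₁ = β₂ := by
  have : A * sin (β₁ - β₂) = 0 := by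
    rw [sin_sub]; linear_combination sin β₁ * e₂ - sin β₂ * e₁
  have := (sin_eq_zero_iff_of_lt_of_lt (by linarith [h₁.1, h₂.2]) (by linarith [h₁.2, h₂.1])).1
    ((mul_eq_zero.1 this).resolve_left hA)
  linarith

lemma eqOn_of_developable {a b : ℝ} (hab : a < b) {e w ξ₁ ξ₂ : ℝ → E3} {β₁ β₂ : ℝ → ℝ}
    (he : ∀ t ∈ Ioo a b, DifferentiableAt ℝ e t) (hw : ∀ t ∈ Ioo a b, DifferentiableAt ℝ w t)
    (hA : ∀ t ∈ Ioo a b, ⟪cross3 (e t) (w t), deriv e t⟫ ≠ 0)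
    (hβ₁ : ContinuousOn β₁ (Icc a b)) (hβ₂ : ContinuousOn β₂ (Icc a b))
    (hβ₁' : ∀ t ∈ Ioo a b, DifferentiableAt ℝ β₁ t) (hβ₂' : ∀ t ∈ Ioo a b, DifferentiableAt ℝ β₂ t)
    (hβ₁I : ∀ t ∈ Icc a b, β₁ t ∈ Ioo 0 π) (hβ₂I : ∀ t ∈ Icc a b, β₂ t ∈ Ioo 0 π)
    (hξ₁ : EqOn ξ₁ (fun x => cos (β₁ x) • e x + sin (β₁ x) • w x) (Icc a b))
    (hξ₂ : EqOn ξ₂ (fun x => cos (β₂ x) • e x + sin (β₂ x) • w x) (Icc a b))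
    (hdev₁ : ∀ t ∈ Ioo a b, ⟪cross3 (e t) (ξ₁ t), deriv ξ₁ t⟫ = 0)
    (hdev₂ : ∀ t ∈ Ioo a b, ⟪cross3 (e t) (ξ₂ t), deriv ξ₂ t⟫ = 0) :
    EqOn ξ₁ ξ₂ (Icc a b) := by
  have hloc : ∀ {β : ℝ → ℝ} {ξ : ℝ → E3},
      EqOn ξ (fun x => cos (β x) • e x + sin (β x) • w x) (Icc a b) → ∀ t ∈ Ioo a b,
      ξ =ᶠ[𝓝 t] fun x => cos (β x) • e x + sin (β x) • w x :=
    fun hξ t ht => eventually_of_mem (Icc_mem_nhds ht.1 ht.2) hξ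
  have hsin : ∀ {β : ℝ → ℝ}, (∀ t ∈ Icc a b, β t ∈ Ioo 0 π) → ∀ t ∈ Ioo a b, sin (β t) ≠ 0 :=
    fun hβI t ht => (sin_pos_of_pos_of_lt_pi (hβI t (Ioo_subset_Icc_self ht)).1
      (hβI t (Ioo_subset_Icc_self ht)).2).ne'
  have hβ : EqOn β₁ β₂ (Icc a b) := by
    refine EqOn.of_subset_closure (s := Ioo a b) (fun t ht => ?_) hβ₁ hβ₂ Ioo_subset_Icc_self
      (closure_Ioo hab.ne).symm.subset
    exact eq_of_cos_mul_add_sin_mul_eq_zero (hA t ht) (hβ₁I t (Ioo_subset_Icc_self ht))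
      (hβ₂I t (Ioo_subset_Icc_self ht))
      (cos_mul_add_sin_mul_eq_zero_of_developable (he t ht).hasDerivAt (hw t ht).hasDerivAt
        (hβ₁' t ht) (hsin hβ₁I t ht) (hloc hξ₁ t ht) (hdev₁ t ht))
      (cos_mul_add_sin_mul_eq_zero_of_developable (he t ht).hasDerivAt (hw t ht).hasDerivAt
        (hβ₂' t ht) (hsin hβ₂I t ht) (hloc hξ₂ t ht) (hdev₂ t ht))
  intro t ht
  simp only [hξ₁ ht, hξ₂ ht, hβ ht]

lemma sin_ne_zero_of_abs_lt_pi {x : ℝ} (hx : x ≠ 0) (h : |x| < π) : sin x ≠ 0 := fun h0 =>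
  hx ((sin_eq_zero_iff_of_lt_of_lt (by linarith [neg_abs_le x]) (by linarith [le_abs_self x])).1 h0)

lemma eqOn_sin_of_eqOn_cos {X : Type*} [TopologicalSpace X] {S : Set X} {α₁ α₂ : X → ℝ}
    (hS : IsPreconnected S) (h₁ : ContinuousOn α₁ S) (h₂ : ContinuousOn α₂ S)
    (hcos : ∀ t ∈ S, cos (α₁ t) = cos (α₂ t)) (hne : ∀ t ∈ S, sin (α₂ t) ≠ 0) {x : X}
    (hx : x ∈ S) (hsign : 0 < sin (α₁ x) ↔ 0 < sin (α₂ x)) :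
    ∀ t ∈ S, sin (α₁ t) = sin (α₂ t) := by
  rcases hS.eq_or_eq_neg_of_sq_eq (f := sin ∘ α₁) (g := sin ∘ α₂)
      (continuous_sin.comp_continuousOn h₁) (continuous_sin.comp_continuousOn h₂)
      (fun t ht => by simp [sin_sq, hcos t ht]) (fun ht => hne _ ht) with h | h
  · exact h
  · have hx' : sin (α₁ x) = -sin (α₂ x) := h hx
    rw [hx'] at hsign
    rcases (hne x hx).lt_or_gt with hlt | hlt
    · exact absurd (hsign.1 (by linarith)) (by linarith)
    · exact absurd (hsign.2 hlt) (by linarith)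

/-- `σ` records the sign of `sin α`, which cannot change on `[a, b]`. -/
def developableStrips (a b ε : ℝ) (d : ℝ → E3) (μ : ℝ → ℝ) (σ : Bool) :
    Set ((Icc a b ×ˢ Ioo (-ε) ε : Set (ℝ × ℝ)) → E3) :=
  {g | ∃ (α β : ℝ → ℝ) (ξ : ℝ → E3),
    ContDiff ℝ ∞ α ∧ ContDiff ℝ ∞ β ∧
    (∀ t ∈ Icc a b, 0 < |α t| ∧ |α t| < π / 2) ∧
    (∀ t ∈ Icc a b, 0 < β t ∧ β t < π) ∧
    (∀ t, ξ t = cos (β t) • deriv d t + sin (β t) • conormal d α t) ∧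
    (∀ t ∈ Icc a b, ⟪cross3 (deriv d t) (ξ t), deriv ξ t⟫ = 0) ∧
    (∀ t ∈ Icc a b, ‖deriv (deriv d) t‖ * cos (α t) = μ t) ∧
    (∀ p : (Icc a b ×ˢ Ioo (-ε) ε : Set (ℝ × ℝ)), g p = d p.1.1 + p.1.2 • ξ p.1.1) ∧
    (0 < sin (α a) ↔ σ)}

lemma developableStrips_subsingleton {a b : ℝ} (hab : a < b) {d : ℝ → E3} (hd : ContDiff ℝ 3 d)
    (harc : ∀ t ∈ Icc a b, ‖deriv d t‖ = 1) (hκ : ∀ t ∈ Icc a b, deriv (deriv d) t ≠ 0)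
    (ε : ℝ) (μ : ℝ → ℝ) (σ : Bool) : (developableStrips a b ε d μ σ).Subsingleton := by
  rintro g₁ ⟨α₁, β₁, ξ₁, hα₁, hβ₁, hαI₁, hβI₁, hξ₁, hdev₁, hgeo₁, hg₁, hσ₁⟩
    g₂ ⟨α₂, β₂, ξ₂, hα₂, hβ₂, hαI₂, hβI₂, hξ₂, hdev₂, hgeo₂, hg₂, hσ₂⟩
  have hd₁ : Differentiable ℝ (deriv d) := (hd.iterate_deriv' 2 1).differentiable two_ne_zero
  have hd₂ : Differentiable ℝ (deriv (deriv d)) :=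
    (hd.iterate_deriv' 1 2).differentiable one_ne_zero
  have hsin_ne : ∀ {α : ℝ → ℝ}, (∀ t ∈ Icc a b, 0 < |α t| ∧ |α t| < π / 2) →
      ∀ t ∈ Icc a b, sin (α t) ≠ 0 := fun hαI t ht =>
    sin_ne_zero_of_abs_lt_pi (abs_pos.1 (hαI t ht).1) ((hαI t ht).2.trans (half_lt_self pi_pos))
  have hcos : ∀ t ∈ Icc a b, cos (α₁ t) = cos (α₂ t) := fun t ht =>
    mul_left_cancel₀ (norm_ne_zero_iff.2 (hκ t ht)) ((hgeo₁ t ht).trans (hgeo₂ t ht).symm)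
  have hsin : ∀ t ∈ Icc a b, sin (α₁ t) = sin (α₂ t) :=
    eqOn_sin_of_eqOn_cos isPreconnected_Icc hα₁.continuous.continuousOn
      hα₂.continuous.continuousOn hcos (hsin_ne hαI₂) (left_mem_Icc.2 hab.le) (hσ₁.trans hσ₂.symm)
  have hξ : EqOn ξ₁ ξ₂ (Icc a b) := by
    refine eqOn_of_developable hab (e := deriv d) (w := conormal d α₁) (fun t _ => hd₁ t)
      (fun t ht => differentiableAt_conormal (hd₁ t) (hd₂ t) (hκ t (Ioo_subset_Icc_self ht))
        (hα₁.differentiable (by simp) t))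
      (fun t ht => ?_) hβ₁.continuous.continuousOn hβ₂.continuous.continuousOn
      (fun t _ => hβ₁.differentiable (by simp) t) (fun t _ => hβ₂.differentiable (by simp) t)
      hβI₁ hβI₂ (fun t _ => hξ₁ t) (fun t ht => ?_) (fun t ht => hdev₁ t (Ioo_subset_Icc_self ht))
      (fun t ht => hdev₂ t (Ioo_subset_Icc_self ht))
    · have hunit : ∀ᶠ x in 𝓝 t, ‖deriv d x‖ = 1 :=
        eventually_of_mem (Icc_mem_nhds ht.1 ht.2) harc
      have ht' := Ioo_subset_Icc_self ht
      rw [inner_cross3_conormal_deriv_deriv hunit (hd₁ t) (hκ t ht'), neg_ne_zero]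
      exact mul_ne_zero (norm_ne_zero_iff.2 (hκ t ht')) (hsin_ne hαI₁ t ht')
    · simp only [hξ₂ t, conormal, hcos t ht, hsin t ht]
  funext p
  rw [hg₁ p, hg₂ p, hξ p.2.1]

lemma exists_four_of_subsingleton {X : Type*} [Nonempty X] (T : Bool → Bool → Set X)
    (hT : ∀ i j, (T i j).Subsingleton) :
    ∃ x₁ x₂ x₃ x₄ : X, ∀ i j, ∀ x ∈ T i j, x = x₁ ∨ x = x₂ ∨ x = x₃ ∨ x = x₄ := by
  have : ∀ i j, ∃ y, ∀ x ∈ T i j, x = y := fun i j => by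
    rcases (hT i j).eq_empty_or_singleton with h | ⟨y, h⟩
    · exact ⟨Classical.arbitrary X, by simp [h]⟩
    · exact ⟨y, by simp [h]⟩
  choose y hy using this
  refine ⟨y true true, y true false, y false true, y false false, ?_⟩
  rintro (_ | _) (_ | _) x hx <;> simp [hy _ _ x hx]

theorem stmt9_general (a b : ℝ) (hab : a < b)
    (c : ℝ → E3) (hc : ContDiff ℝ ∞ c)
    (harc : ∀ t ∈ Icc a b, ‖deriv c t‖ = 1)
    (hκpos : ∀ t ∈ Icc a b, 0 < ‖deriv (deriv c) t‖)
    (μ : ℝ → ℝ)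
    (ε : ℝ) :
    ∃ g₁ g₂ g₃ g₄ : (Icc a b ×ˢ Ioo (-ε) ε : Set (ℝ × ℝ)) → E3,
      ∀ g : (Icc a b ×ˢ Ioo (-ε) ε : Set (ℝ × ℝ)) → E3,
        (∃ s : ℝ → ℝ, (s = id ∨ s = fun t => a + b - t) ∧
          ∃ (α β : ℝ → ℝ) (ξ : ℝ → E3),
            ContDiff ℝ ∞ α ∧ ContDiff ℝ ∞ β ∧
            (∀ t ∈ Icc a b, 0 < |α t| ∧ |α t| < π / 2) ∧
            (∀ t ∈ Icc a b, 0 < β t ∧ β t < π) ∧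
            -- `ξ` is built from the Frenet frame `(ê, n̂, b̂)` of `c ∘ s`:
            (∀ t, ξ t = cos (β t) • deriv (c ∘ s) t +
              sin (β t) • (cos (α t) •
                  (‖deriv (deriv (c ∘ s)) t‖⁻¹ • deriv (deriv (c ∘ s)) t) +
                sin (α t) • cross3 (deriv (c ∘ s) t)
                  (‖deriv (deriv (c ∘ s)) t‖⁻¹ • deriv (deriv (c ∘ s)) t))) ∧
            -- `g` is developable:
            (∀ t ∈ Icc a b, ⟪cross3 (deriv (c ∘ s) t) (ξ t), deriv ξ t⟫ = 0) ∧
            -- geodesic curvature condition `κ(s(t)) cos α(t) = μ(t)`: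
            (∀ t ∈ Icc a b, ‖deriv (deriv (c ∘ s)) t‖ * cos (α t) = μ t) ∧
            (∀ p : (Icc a b ×ˢ Ioo (-ε) ε : Set (ℝ × ℝ)),
              g p = c (s p.1.1) + p.1.2 • ξ p.1.1)) →
        g = g₁ ∨ g = g₂ ∨ g = g₃ ∨ g = g₄ := by
  have hc3 : ContDiff ℝ 3 c := hc.of_le (WithTop.coe_le_coe.2 le_top)
  have hκ : ∀ t ∈ Icc a b, deriv (deriv c) t ≠ 0 := fun t ht => norm_pos_iff.1 (hκpos t ht)
  have hrev : ∀ t ∈ Icc a b, a + b - t ∈ Icc a b := fun t ht =>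
    ⟨by linarith [ht.2], by linarith [ht.1]⟩
  have hstrips : ∀ (i : Bool) (σ : Bool), (developableStrips a b ε
      (c ∘ bif i then id else fun t => a + b - t) μ σ).Subsingleton
    | true, σ => developableStrips_subsingleton hab hc3 harc hκ ε μ σ
    | false, σ => developableStrips_subsingleton hab (hc3.comp (by fun_prop))
        (fun t ht => (norm_deriv_comp_const_sub c _ t).trans (harc _ (hrev t ht)))
        (fun t ht => (deriv_deriv_comp_const_sub c _ t).trans_ne (hκ _ (hrev t ht))) ε μ σ
  obtain ⟨g₁, g₂, g₃, g₄, hg⟩ := exists_four_of_subsingleton _ hstrips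
  refine ⟨g₁, g₂, g₃, g₄, fun g ⟨s, hs, α, β, ξ, hα, hβ, hαI, hβI, hξ, hdev, hgeo, hgs⟩ => ?_⟩
  have hmem : g ∈ developableStrips a b ε (c ∘ s) μ (decide (0 < sin (α a))) :=
    ⟨α, β, ξ, hα, hβ, hαI, hβI, hξ, hdev, hgeo, hgs, by simp⟩
  rcases hs with rfl | rfl
  · exact hg true _ g hmem
  · exact hg false _ g hmem

/-- Theorem A / Proposition 2.1: among all developable strips
`g(t,v) = c(s(t)) + v ξ(t)` (with `s` the identity or the reversal `t ↦ a+b-t`,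
`ξ` built from the Frenet frame of `c ∘ s` via angular functions `α, β`,
satisfying the developability condition and the geodesic curvature condition
`κ(s(t)) cos α(t) = μ(t)`), regarded as maps on `I × (-ε, ε)`, there are at
most four. -/
theorem stmt9 (a b : ℝ) (hab : a < b)
    (c : ℝ → E3) (hc : ContDiff ℝ ∞ c) (hinj : InjOn c (Icc a b))
    (harc : ∀ t ∈ Icc a b, ‖deriv c t‖ = 1)
    (hκpos : ∀ t ∈ Icc a b, 0 < ‖deriv (deriv c) t‖)
    (μ : ℝ → ℝ) (hμ : ContDiff ℝ ∞ μ)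
    (hμpos : ∀ t ∈ Icc a b, 0 < μ t)
    (hμκ : ∀ t ∈ Icc a b, ∀ t' ∈ Icc a b, |μ t| < ‖deriv (deriv c) t'‖)
    (ε : ℝ) (hε : 0 < ε) :
    ∃ g₁ g₂ g₃ g₄ : (Icc a b ×ˢ Ioo (-ε) ε : Set (ℝ × ℝ)) → E3,
      ∀ g : (Icc a b ×ˢ Ioo (-ε) ε : Set (ℝ × ℝ)) → E3,
        (∃ s : ℝ → ℝ, (s = id ∨ s = fun t => a + b - t) ∧
          ∃ (α β : ℝ → ℝ) (ξ : ℝ → E3),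
            ContDiff ℝ ∞ α ∧ ContDiff ℝ ∞ β ∧
            (∀ t ∈ Icc a b, 0 < |α t| ∧ |α t| < π / 2) ∧
            (∀ t ∈ Icc a b, 0 < β t ∧ β t < π) ∧
            -- `ξ` is built from the Frenet frame `(ê, n̂, b̂)` of `c ∘ s`:
            (∀ t, ξ t = cos (β t) • deriv (c ∘ s) t +
              sin (β t) • (cos (α t) •
                  (‖deriv (deriv (c ∘ s)) t‖⁻¹ • deriv (deriv (c ∘ s)) t) +
                sin (α t) • cross3 (deriv (c ∘ s) t)
                  (‖deriv (deriv (c ∘ s)) t‖⁻¹ • deriv (deriv (c ∘ s)) t))) ∧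
            -- `g` is developable:
            (∀ t ∈ Icc a b, ⟪cross3 (deriv (c ∘ s) t) (ξ t), deriv ξ t⟫ = 0) ∧
            -- geodesic curvature condition `κ(s(t)) cos α(t) = μ(t)`:
            (∀ t ∈ Icc a b, ‖deriv (deriv (c ∘ s)) t‖ * cos (α t) = μ t) ∧
            (∀ p : (Icc a b ×ˢ Ioo (-ε) ε : Set (ℝ × ℝ)),
              g p = c (s p.1.1) + p.1.2 • ξ p.1.1)) →
        g = g₁ ∨ g = g₂ ∨ g = g₃ ∨ g = g₄ :=
  stmt9_general a b hab c hc harc hκpos μ ε
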